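/- arXiv:2207.01716 — 2 statements merged into one kernel-verified Lean document; each statement's English description precedes it below -/
import Mathlib

section
/- Let 0 < c < ω and let a(t) = -ω - c·t·sin t for all t ≥ 0, and assume that the series ∑_k |ln|1 + b_k|| is summable. Then there exists a constant K > 0 such that |u(t,s)| ≤ K · e^{-(ω-c)(t-s)} · e^{2cs} for all t ≥ s ≥ 0; in particular the trivial solution of the corresponding scalar homogeneous generalized linear differential equation is globally (non uniformly exponentially) asymptotically stable. -/
/-!
The transition function factors as `exp (∫ₛᵗ a)` times the product of the jumps. Since
`|x| ≤ exp |log x|`, every partial product of the jumps is bounded by `exp (∑ₖ |log |1 + bₖ||)`.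
The integral is explicit, `∫ₛᵗ r sin r dr = (sin t - t cos t) - (sin s - s cos s)`, and bounding
the oscillating terms by `2c + c t + c s` gives the growth rate `-(ω - c)` in `t - s` with the
non-uniform factor `e^{2cs}`; stability and attractivity follow from this estimate.
-/

/-- The transition function of the scalar impulsive equation `x' = a(t)x`, `Δ⁺x(τ_k) = b_k x(τ_k)`
(equivalently, of the corresponding scalar homogeneous generalized linear differential
equation): `u(t,s) = exp(∫_s^t a) · ∏_{k : τ_k ∈ [s,t)} (1 + b_k)`. -/
noncomputable def transition (a : ℝ → ℝ) (τ b : ℕ → ℝ) (t s : ℝ) : ℝ :=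
  Real.exp (∫ r in s..t, a r) * ∏ᶠ k ∈ {k : ℕ | s ≤ τ k ∧ τ k < t}, (1 + b k)

open Real Filter Topology

lemma Real.abs_le_exp_abs_log (x : ℝ) : |x| ≤ exp |log x| := by
  rcases eq_or_ne x 0 with rfl | hx
  · simp
  · calc |x| = exp (log |x|) := (exp_log (abs_pos.2 hx)).symm
      _ ≤ exp |log x| := by rw [log_abs]; exact exp_le_exp.2 (le_abs_self _)

section JumpProduct

variable {ι : Type*} {f : ι → ℝ}

lemma abs_prod_le_exp_tsum_abs_log (hf : Summable fun i => |log (f i)|) (s : Finset ι) :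
    |∏ i ∈ s, f i| ≤ exp (∑' i, |log (f i)|) :=
  calc |∏ i ∈ s, f i| = ∏ i ∈ s, |f i| := Finset.abs_prod s f
    _ ≤ ∏ i ∈ s, exp |log (f i)| :=
      Finset.prod_le_prod (fun _ _ => abs_nonneg _) fun i _ => abs_le_exp_abs_log (f i)
    _ = exp (∑ i ∈ s, |log (f i)|) := (exp_sum s _).symm
    _ ≤ exp (∑' i, |log (f i)|) :=
      exp_le_exp.2 (hf.sum_le_tsum s fun _ _ => abs_nonneg _)

lemma abs_finprod_mem_le_exp_tsum_abs_log (hf : Summable fun i => |log (f i)|) (s : Set ι) :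
    |∏ᶠ i ∈ s, f i| ≤ exp (∑' i, |log (f i)|) := by
  by_cases hfin : (s ∩ Function.mulSupport f).Finite
  · rw [← finprod_mem_inter_mulSupport, finprod_mem_eq_finite_toFinset_prod f hfin]
    exact abs_prod_le_exp_tsum_abs_log hf _
  · rw [finprod_mem_eq_one_of_infinite hfin, abs_one]
    exact one_le_exp (tsum_nonneg fun _ => abs_nonneg _)

end JumpProduct

lemma abs_transition_le (a : ℝ → ℝ) (τ b : ℕ → ℝ)
    (hb : Summable fun k => |log (|1 + b k|)|) (t s : ℝ) :
    |transition a τ b t s| ≤ exp (∫ r in s..t, a r) * exp (∑' k, |log (|1 + b k|)|) := by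
  simp only [log_abs] at hb ⊢
  rw [transition, abs_mul, abs_exp]
  gcongr
  exact abs_finprod_mem_le_exp_tsum_abs_log hb _

lemma integral_mul_sin (s t : ℝ) :
    ∫ r in s..t, r * sin r = (sin t - t * cos t) - (sin s - s * cos s) := by
  refine intervalIntegral.integral_eq_sub_of_hasDerivAt (f := fun r => sin r - r * cos r)
    (fun x _ => ?_)
    ((by fun_prop : Continuous fun r => r * sin r).intervalIntegrable _ _)
  exact ((hasDerivAt_sin x).sub ((hasDerivAt_id' x).mul (hasDerivAt_cos x))).congr_deriv (by ring)

lemma integral_neg_sub_mul_mul_sin_le {ω c s t : ℝ} (hc : 0 ≤ c) (hs : 0 ≤ s) (hst : s ≤ t) :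
    ∫ r in s..t, (-ω - c * r * sin r) ≤ 2 * c + -(ω - c) * (t - s) + 2 * c * s := by
  have hintegrable : IntervalIntegrable (fun r => c * r * sin r) MeasureTheory.volume s t :=
    ((continuous_const.mul continuous_id).mul continuous_sin).intervalIntegrable _ _
  rw [intervalIntegral.integral_sub intervalIntegrable_const hintegrable]
  simp only [mul_assoc, intervalIntegral.integral_const_mul, integral_mul_sin,
    intervalIntegral.integral_const, smul_eq_mul]
  have ht : 0 ≤ t := hs.trans hst
  nlinarith [neg_one_le_sin t, sin_le_one s, mul_le_mul_of_nonneg_left (cos_le_one t) ht,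
    mul_le_mul_of_nonneg_left (neg_one_le_cos s) hs]

section Stability

variable {u : ℝ → ℝ → ℝ} {K l μ : ℝ}

lemma stable_of_abs_le_exp (hK : 0 < K) (hl : 0 ≤ l)
    (hu : ∀ s t : ℝ, 0 ≤ s → s ≤ t → |u t s| ≤ K * exp (-l * (t - s)) * exp (μ * s)) :
    ∀ s₀ ≥ (0 : ℝ), ∀ ε > (0 : ℝ), ∃ δ > (0 : ℝ), ∀ x₀ : ℝ, |x₀| < δ →
      ∀ t ≥ s₀, |u t s₀ * x₀| < ε := by
  intro s₀ hs₀ ε hε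
  set C := K * exp (μ * s₀)
  have hC : 0 < C := by positivity
  refine ⟨ε / C, div_pos hε hC, fun x₀ hx₀ t ht => ?_⟩
  have hdecay : exp (-l * (t - s₀)) ≤ 1 := exp_le_one_iff.2 <|
    mul_nonpos_of_nonpos_of_nonneg (neg_nonpos.2 hl) (sub_nonneg.2 ht)
  have hu_le : |u t s₀| ≤ C :=
    calc |u t s₀| ≤ K * exp (-l * (t - s₀)) * exp (μ * s₀) := hu s₀ t hs₀ ht
      _ ≤ K * 1 * exp (μ * s₀) := by gcongr
      _ = C := by ring
  calc |u t s₀ * x₀| = |u t s₀| * |x₀| := abs_mul _ _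
    _ ≤ C * |x₀| := mul_le_mul_of_nonneg_right hu_le (abs_nonneg _)
    _ < C * (ε / C) := mul_lt_mul_of_pos_left hx₀ hC
    _ = ε := mul_div_cancel₀ ε hC.ne'

lemma tendsto_zero_of_abs_le_exp (hl : 0 < l)
    (hu : ∀ s t : ℝ, 0 ≤ s → s ≤ t → |u t s| ≤ K * exp (-l * (t - s)) * exp (μ * s)) :
    ∀ s₀ ≥ (0 : ℝ), ∀ x₀ : ℝ, Tendsto (fun t => |u t s₀ * x₀|) atTop (𝓝 0) := by
  intro s₀ hs₀ x₀
  have hdecay : Tendsto (fun t => K * exp (μ * s₀) * |x₀| * exp (-l * (t - s₀))) atTop (𝓝 0) := by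
    have hlin : Tendsto (fun t : ℝ => -l * (t - s₀)) atTop atBot :=
      (tendsto_atTop_add_const_right _ _ tendsto_id).const_mul_atTop_of_neg (neg_neg_of_pos hl)
    simpa using (tendsto_exp_atBot.comp hlin).const_mul (K * exp (μ * s₀) * |x₀|)
  refine squeeze_zero' (Eventually.of_forall fun t => abs_nonneg _) ?_ hdecay
  filter_upwards [eventually_ge_atTop s₀] with t ht
  calc |u t s₀ * x₀| = |u t s₀| * |x₀| := abs_mul _ _
    _ ≤ K * exp (-l * (t - s₀)) * exp (μ * s₀) * |x₀| :=
      mul_le_mul_of_nonneg_right (hu s₀ t hs₀ ht) (abs_nonneg _)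
    _ = K * exp (μ * s₀) * |x₀| * exp (-l * (t - s₀)) := by ring

end Stability

theorem stmt_12_general (ω c : ℝ) (τ b : ℕ → ℝ) (hc : 0 < c) (hcω : c < ω)
    (hsum : Summable fun k => |Real.log (|1 + b k|)|) :
    (∃ K > (0 : ℝ), ∀ s t : ℝ, 0 ≤ s → s ≤ t →
      |transition (fun r => -ω - c * r * Real.sin r) τ b t s| ≤
        K * Real.exp (-(ω - c) * (t - s)) * Real.exp (2 * c * s)) ∧
    ((∀ s₀ ≥ (0 : ℝ), ∀ ε > (0 : ℝ), ∃ δ > (0 : ℝ), ∀ x₀ : ℝ, |x₀| < δ →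
        ∀ t ≥ s₀, |transition (fun r => -ω - c * r * Real.sin r) τ b t s₀ * x₀| < ε) ∧
      (∀ s₀ ≥ (0 : ℝ), ∀ x₀ : ℝ,
        Filter.Tendsto (fun t => |transition (fun r => -ω - c * r * Real.sin r) τ b t s₀ * x₀|)
          Filter.atTop (nhds 0))) := by
  set M := exp (∑' k, |log (|1 + b k|)|)
  have hbound : ∀ s t : ℝ, 0 ≤ s → s ≤ t →
      |transition (fun r => -ω - c * r * sin r) τ b t s| ≤
        exp (2 * c) * M * exp (-(ω - c) * (t - s)) * exp (2 * c * s) := by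
    intro s t hs hst
    calc _ ≤ exp (∫ r in s..t, (-ω - c * r * sin r)) * M := abs_transition_le _ τ b hsum t s
      _ ≤ exp (2 * c + -(ω - c) * (t - s) + 2 * c * s) * M := by
        gcongr; exact integral_neg_sub_mul_mul_sin_le hc.le hs hst
      _ = _ := by rw [exp_add, exp_add]; ring
  have hK : 0 < exp (2 * c) * M := by positivity
  exact ⟨⟨_, hK, hbound⟩, stable_of_abs_le_exp hK (by linarith) hbound,
    tendsto_zero_of_abs_le_exp (by linarith) hbound⟩

/-- For `a(t) = -ω - c t sin t` with `0 < c < ω`, and `∑_k |ln|1+b_k||` summable, the transition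
function satisfies `|u(t,s)| ≤ K e^{-(ω-c)(t-s)} e^{2cs}`; in particular the trivial solution of
the corresponding scalar homogeneous GLDE is globally (non uniformly exponentially)
asymptotically stable: it is stable and every solution tends to `0`. -/
theorem stmt_12 (ω c : ℝ) (τ b : ℕ → ℝ) (hc : 0 < c) (hcω : c < ω)
    (hτmono : StrictMono τ) (hτpos : ∀ k, 0 < τ k)
    (hτtop : Filter.Tendsto τ Filter.atTop Filter.atTop)
    (hb : ∀ k, 1 + b k ≠ 0)
    (hsum : Summable fun k => |Real.log (|1 + b k|)|) :
    (∃ K > (0 : ℝ), ∀ s t : ℝ, 0 ≤ s → s ≤ t →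
      |transition (fun r => -ω - c * r * Real.sin r) τ b t s| ≤
        K * Real.exp (-(ω - c) * (t - s)) * Real.exp (2 * c * s)) ∧
    ((∀ s₀ ≥ (0 : ℝ), ∀ ε > (0 : ℝ), ∃ δ > (0 : ℝ), ∀ x₀ : ℝ, |x₀| < δ →
        ∀ t ≥ s₀, |transition (fun r => -ω - c * r * Real.sin r) τ b t s₀ * x₀| < ε) ∧
      (∀ s₀ ≥ (0 : ℝ), ∀ x₀ : ℝ,
        Filter.Tendsto (fun t => |transition (fun r => -ω - c * r * Real.sin r) τ b t s₀ * x₀|)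
          Filter.atTop (nhds 0))) :=
  stmt_12_general ω c τ b hc hcω hsum
end

section
/- Let α > 0. Assume that a is measurable with |a(t)| ≤ M for all t ≥ 0 and some M > 0, that a satisfies the average condition: for every ε > 0 there exists T > 0 such that for all 0 ≤ s ≤ t with t - s ≥ T one has ∫_s^t a(r) dr ≤ (-α + ε)(t - s), and that the series ∑_k |ln|1 + b_k|| is summable. Then for every α' with 0 < α' < α there exists a constant K > 0 such that |u(t,s)| ≤ K · e^{-α'(t-s)} for all t ≥ s ≥ 0; in particular the trivial solution of the corresponding scalar homogeneous generalized linear differential equation is uniformly asymptotically stable. -/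
open Real Filter Topology

def UniformlyStable (u : ℝ → ℝ → ℝ) : Prop :=
  ∀ ε > (0 : ℝ), ∃ δ > (0 : ℝ), ∀ s₀ ≥ (0 : ℝ), ∀ x₀ : ℝ, |x₀| < δ →
    ∀ t ≥ s₀, |u t s₀ * x₀| < ε

def UniformlyAttractive (u : ℝ → ℝ → ℝ) : Prop :=
  ∃ δ₀ > (0 : ℝ), ∀ ε > (0 : ℝ), ∃ T ≥ (0 : ℝ), ∀ s₀ ≥ (0 : ℝ), ∀ x₀ : ℝ, |x₀| < δ₀ →
    ∀ t ≥ s₀ + T, |u t s₀ * x₀| < ε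

section ExpBound

variable {u : ℝ → ℝ → ℝ} {K β : ℝ}

theorem uniformlyStable_of_exp_bound (hK : 0 < K) (hβ : 0 < β)
    (hu : ∀ s t : ℝ, 0 ≤ s → s ≤ t → |u t s| ≤ K * exp (-β * (t - s))) :
    UniformlyStable u := by
  intro ε hε
  refine ⟨ε / K, by positivity, fun s₀ hs₀ x₀ hx₀ t ht => ?_⟩
  have hdecay : exp (-β * (t - s₀)) ≤ 1 :=
    exp_le_one_iff.mpr (by nlinarith [sub_nonneg.mpr ht])
  have hbound : |u t s₀| ≤ K := (hu s₀ t hs₀ ht).trans (by nlinarith)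
  calc |u t s₀ * x₀| = |u t s₀| * |x₀| := abs_mul _ _
    _ ≤ K * |x₀| := mul_le_mul_of_nonneg_right hbound (abs_nonneg _)
    _ < K * (ε / K) := mul_lt_mul_of_pos_left hx₀ hK
    _ = ε := mul_div_cancel₀ ε hK.ne'

theorem uniformlyAttractive_of_exp_bound (hβ : 0 < β)
    (hu : ∀ s t : ℝ, 0 ≤ s → s ≤ t → |u t s| ≤ K * exp (-β * (t - s))) :
    UniformlyAttractive u := by
  refine ⟨1, one_pos, fun ε hε => ?_⟩
  have hlim : Tendsto (fun T => K * exp (-β * T)) atTop (𝓝 0) := by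
    simpa using (tendsto_exp_atBot.comp
      (tendsto_id.const_mul_atTop_of_neg (neg_neg_of_pos hβ))).const_mul K
  obtain ⟨T, hTε, hT0⟩ :=
    ((hlim.eventually (ge_mem_nhds hε)).and (eventually_ge_atTop 0)).exists
  refine ⟨T, hT0, fun s₀ hs₀ x₀ hx₀ t ht => ?_⟩
  have hK : 0 ≤ K := by simpa using (abs_nonneg _).trans (hu 0 0 le_rfl le_rfl)
  have hdecay : K * exp (-β * (t - s₀)) ≤ ε :=
    le_trans (mul_le_mul_of_nonneg_left (exp_le_exp.mpr (by nlinarith)) hK) hTε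
  calc |u t s₀ * x₀| = |u t s₀| * |x₀| := abs_mul _ _
    _ ≤ ε * |x₀| := mul_le_mul_of_nonneg_right
        ((hu s₀ t hs₀ (by linarith)).trans hdecay) (abs_nonneg _)
    _ < ε * 1 := mul_lt_mul_of_pos_left hx₀ hε
    _ = ε := mul_one ε

end ExpBound

/-- When `s ∩ mulSupport f` is infinite, `finprod` takes the junk value `1`, which also satisfies
the bound. -/
theorem abs_finprod_mem_le_exp_tsum {ι : Type*} (f : ι → ℝ) (s : Set ι)
    (hf : Summable fun i => |log (|f i|)|) :
    |∏ᶠ i ∈ s, f i| ≤ exp (∑' i, |log (|f i|)|) := by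
  by_cases hfin : (s ∩ Function.mulSupport f).Finite
  · rw [finprod_mem_eq_prod f hfin, Finset.abs_prod]
    calc ∏ i ∈ hfin.toFinset, |f i|
        ≤ ∏ i ∈ hfin.toFinset, exp |log (|f i|)| :=
          Finset.prod_le_prod (fun i _ => abs_nonneg _) fun i _ =>
            (le_exp_log |f i|).trans (exp_le_exp.mpr (le_abs_self _))
      _ = exp (∑ i ∈ hfin.toFinset, |log (|f i|)|) := (exp_sum _ _).symm
      _ ≤ exp (∑' i, |log (|f i|)|) :=
          exp_le_exp.mpr (hf.sum_le_tsum _ fun i _ => abs_nonneg _)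
  · rw [finprod_mem_eq_one_of_infinite hfin, abs_one]
    exact one_le_exp (tsum_nonneg fun i => abs_nonneg _)

theorem intervalIntegral_le_mul_of_abs_le {a : ℝ → ℝ} {M s t : ℝ} (hst : s ≤ t)
    (h : ∀ r ∈ Set.Ioc s t, |a r| ≤ M) : ∫ r in s..t, a r ≤ M * (t - s) := by
  have hnorm := intervalIntegral.norm_integral_le_of_norm_le_const (a := s) (b := t) (f := a)
    (C := M) (by simpa only [Set.uIoc_of_le hst, Real.norm_eq_abs] using h)
  rw [Real.norm_eq_abs, abs_of_nonneg (sub_nonneg.mpr hst)] at hnorm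
  exact (le_abs_self _).trans hnorm

theorem intervalIntegral_le_of_bound_on_long_intervals {a : ℝ → ℝ} {M β T : ℝ}
    (hbd : ∀ r ≥ (0 : ℝ), |a r| ≤ M) (hβ : 0 ≤ β) (hT0 : 0 ≤ T)
    (hlong : ∀ s t : ℝ, 0 ≤ s → s ≤ t → T ≤ t - s → ∫ r in s..t, a r ≤ -β * (t - s))
    {s t : ℝ} (hs : 0 ≤ s) (hst : s ≤ t) :
    ∫ r in s..t, a r ≤ (M + β) * T - β * (t - s) := by
  have hM : 0 ≤ M := (abs_nonneg _).trans (hbd 0 le_rfl)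
  rcases le_or_gt T (t - s) with hlen | hlen
  · nlinarith [hlong s t hs hst hlen]
  · have hshort := intervalIntegral_le_mul_of_abs_le hst fun r hr =>
      hbd r (hs.trans hr.1.le)
    nlinarith

theorem abs_transition_le_exp {a : ℝ → ℝ} {τ b : ℕ → ℝ} {M α : ℝ}
    (hbd : ∀ t ≥ (0 : ℝ), |a t| ≤ M)
    (havg : ∀ ε > (0 : ℝ), ∃ T > (0 : ℝ), ∀ s t : ℝ, 0 ≤ s → s ≤ t → T ≤ t - s →
      (∫ r in s..t, a r) ≤ (-α + ε) * (t - s))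
    (hsum : Summable fun k => |log (|1 + b k|)|) {α' : ℝ} (hα' : 0 < α') (hα'α : α' < α) :
    ∃ K > (0 : ℝ), ∀ s t : ℝ, 0 ≤ s → s ≤ t →
      |transition a τ b t s| ≤ K * exp (-α' * (t - s)) := by
  obtain ⟨T, hT0, hT⟩ := havg (α - α') (sub_pos.mpr hα'α)
  have hlong : ∀ s t : ℝ, 0 ≤ s → s ≤ t → T ≤ t - s → ∫ r in s..t, a r ≤ -α' * (t - s) :=
    fun s t hs hst hlen => (hT s t hs hst hlen).trans_eq (by ring)
  refine ⟨exp (∑' k, |log (|1 + b k|)|) * exp ((M + α') * T), by positivity,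
    fun s t hs hst => ?_⟩
  have hint := intervalIntegral_le_of_bound_on_long_intervals hbd hα'.le hT0.le hlong hs hst
  rw [transition, abs_mul, abs_exp]
  calc exp (∫ r in s..t, a r) * |∏ᶠ k ∈ {k : ℕ | s ≤ τ k ∧ τ k < t}, (1 + b k)|
      ≤ exp ((M + α') * T - α' * (t - s)) * exp (∑' k, |log (|1 + b k|)|) :=
        mul_le_mul (exp_le_exp.mpr hint) (abs_finprod_mem_le_exp_tsum _ _ hsum)
          (abs_nonneg _) (exp_nonneg _)
    _ = exp (∑' k, |log (|1 + b k|)|) * exp ((M + α') * T) * exp (-α' * (t - s)) := by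
        rw [← exp_add, ← exp_add, ← exp_add]
        ring_nf

theorem stmt_13_general (a : ℝ → ℝ) (τ b : ℕ → ℝ) (M α : ℝ)
    (hbd : ∀ t ≥ (0 : ℝ), |a t| ≤ M) (hα : 0 < α)
    (havg : ∀ ε > (0 : ℝ), ∃ T > (0 : ℝ), ∀ s t : ℝ, 0 ≤ s → s ≤ t → T ≤ t - s →
      (∫ r in s..t, a r) ≤ (-α + ε) * (t - s))
    (hsum : Summable fun k => |Real.log (|1 + b k|)|) :
    (∀ α' : ℝ, 0 < α' → α' < α → ∃ K > (0 : ℝ), ∀ s t : ℝ, 0 ≤ s → s ≤ t →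
      |transition a τ b t s| ≤ K * Real.exp (-α' * (t - s))) ∧
    ((∀ ε > (0 : ℝ), ∃ δ > (0 : ℝ), ∀ s₀ ≥ (0 : ℝ), ∀ x₀ : ℝ, |x₀| < δ →
        ∀ t ≥ s₀, |transition a τ b t s₀ * x₀| < ε) ∧
      (∃ δ₀ > (0 : ℝ), ∀ ε > (0 : ℝ), ∃ T ≥ (0 : ℝ), ∀ s₀ ≥ (0 : ℝ), ∀ x₀ : ℝ, |x₀| < δ₀ →
        ∀ t ≥ s₀ + T, |transition a τ b t s₀ * x₀| < ε)) := by
  have hexp := fun α' (hα' : 0 < α') (hα'α : α' < α) =>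
    abs_transition_le_exp (τ := τ) hbd havg hsum hα' hα'α
  obtain ⟨K, hK, hbound⟩ := hexp (α / 2) (half_pos hα) (half_lt_self hα)
  exact ⟨hexp, uniformlyStable_of_exp_bound hK (half_pos hα) hbound,
    uniformlyAttractive_of_exp_bound (half_pos hα) hbound⟩

/-- If `a` is measurable and bounded, satisfies the Bohl-type average condition with rate `-α`,
and `∑_k |ln|1+b_k||` is summable, then for every `0 < α' < α` the transition function admits a
uniform exponential bound with rate `α'`; in particular the trivial solution of the
corresponding scalar homogeneous GLDE is uniformly asymptotically stable. -/
theorem stmt_13 (a : ℝ → ℝ) (τ b : ℕ → ℝ) (M α : ℝ)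
    (ha : Measurable a) (hM : 0 < M) (hbd : ∀ t ≥ (0 : ℝ), |a t| ≤ M) (hα : 0 < α)
    (havg : ∀ ε > (0 : ℝ), ∃ T > (0 : ℝ), ∀ s t : ℝ, 0 ≤ s → s ≤ t → T ≤ t - s →
      (∫ r in s..t, a r) ≤ (-α + ε) * (t - s))
    (hτmono : StrictMono τ) (hτpos : ∀ k, 0 < τ k)
    (hτtop : Filter.Tendsto τ Filter.atTop Filter.atTop)
    (hb : ∀ k, 1 + b k ≠ 0)
    (hsum : Summable fun k => |Real.log (|1 + b k|)|) :
    (∀ α' : ℝ, 0 < α' → α' < α → ∃ K > (0 : ℝ), ∀ s t : ℝ, 0 ≤ s → s ≤ t →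
      |transition a τ b t s| ≤ K * Real.exp (-α' * (t - s))) ∧
    ((∀ ε > (0 : ℝ), ∃ δ > (0 : ℝ), ∀ s₀ ≥ (0 : ℝ), ∀ x₀ : ℝ, |x₀| < δ →
        ∀ t ≥ s₀, |transition a τ b t s₀ * x₀| < ε) ∧
      (∃ δ₀ > (0 : ℝ), ∀ ε > (0 : ℝ), ∃ T ≥ (0 : ℝ), ∀ s₀ ≥ (0 : ℝ), ∀ x₀ : ℝ, |x₀| < δ₀ →
        ∀ t ≥ s₀ + T, |transition a τ b t s₀ * x₀| < ε)) :=
  stmt_13_general a τ b M α hbd hα havg hsum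
end
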